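/- arXiv:2402.14555 — 5 statements merged into one kernel-verified Lean document; each statement's English description precedes it below -/
import Mathlib

section
/- With k_t = 1 / (1 + (μ e^{μt} / p_t) ∫₀ᵗ p_s e^{-μs} ds), p_t = exp(-∫₀ᵗ λ_s ds), μ > 0 and λ continuous nonnegative, we have 0 < k_t ≤ 1 for all t ≥ 0, and k_t is (weakly) decreasing in t. -/
open MeasureTheory intervalIntegral Real

/-- The Riccati recovery schedule satisfies `0 < k t ≤ 1` and is
weakly decreasing on `[0, ∞)`. -/
theorem riccati_tontine_bounds
    (μ : ℝ) (hμ : 0 < μ) (l : ℝ → ℝ) (hl : Continuous l) (hl0 : ∀ t, 0 ≤ l t)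
    (p : ℝ → ℝ) (hp : ∀ t, p t = Real.exp (-∫ s in (0:ℝ)..t, l s))
    (k : ℝ → ℝ)
    (hk : ∀ t, k t =
      (1 + (μ * Real.exp (μ * t) / p t) * ∫ s in (0:ℝ)..t, p s * Real.exp (-μ * s))⁻¹) :
    (∀ t, 0 ≤ t → 0 < k t ∧ k t ≤ 1) ∧ AntitoneOn k (Set.Ici (0:ℝ)) := by
  -- continuity of the primitive of l
  have hprim : Continuous fun t => ∫ s in (0:ℝ)..t, l s :=
    intervalIntegral.continuous_primitive (fun a b => hl.intervalIntegrable a b) 0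
  have hpc : Continuous p := by
    have : Continuous fun t => Real.exp (-∫ s in (0:ℝ)..t, l s) :=
      Real.continuous_exp.comp hprim.neg
    exact (funext hp ▸ this : Continuous p)
  have hppos : ∀ t, 0 < p t := fun t => (hp t) ▸ Real.exp_pos _
  have hic : Continuous fun s => p s * Real.exp (-μ * s) :=
    hpc.mul (Real.continuous_exp.comp (continuous_const.mul continuous_id))
  -- F t ≥ 0 for t ≥ 0, F monotone on Ici 0
  set F : ℝ → ℝ := fun t => ∫ s in (0:ℝ)..t, p s * Real.exp (-μ * s) with hF
  have hFnn : ∀ t, 0 ≤ t → 0 ≤ F t := fun t ht =>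
    intervalIntegral.integral_nonneg ht (fun s _ => mul_nonneg (hppos s).le (Real.exp_pos _).le)
  have hFmono : ∀ a b, 0 ≤ a → a ≤ b → F a ≤ F b := by
    intro a b ha hab
    have hsplit : F b = F a + ∫ s in a..b, p s * Real.exp (-μ * s) :=
      (intervalIntegral.integral_add_adjacent_intervals
        (hic.intervalIntegrable 0 a) (hic.intervalIntegrable a b)).symm
    have : 0 ≤ ∫ s in a..b, p s * Real.exp (-μ * s) :=
      intervalIntegral.integral_nonneg hab (fun s _ => mul_nonneg (hppos s).le (Real.exp_pos _).le)
    linarith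
  -- A t := μ * exp(μ t) / p t is nonneg and monotone on Ici 0
  set A : ℝ → ℝ := fun t => μ * Real.exp (μ * t) / p t with hA
  have hApos : ∀ t, 0 < A t := fun t => by
    have := hppos t; positivity
  have hAmono : ∀ a b, 0 ≤ a → a ≤ b → A a ≤ A b := by
    intro a b _ hab
    have h1 : Real.exp (μ * a) ≤ Real.exp (μ * b) :=
      Real.exp_le_exp.mpr (by nlinarith)
    have h2 : (∫ s in (0:ℝ)..a, l s) ≤ ∫ s in (0:ℝ)..b, l s := by
      have hsplit : (∫ s in (0:ℝ)..b, l s) =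
          (∫ s in (0:ℝ)..a, l s) + ∫ s in a..b, l s :=
        (intervalIntegral.integral_add_adjacent_intervals
          (hl.intervalIntegrable 0 a) (hl.intervalIntegrable a b)).symm
      have : 0 ≤ ∫ s in a..b, l s :=
        intervalIntegral.integral_nonneg hab (fun s _ => hl0 s)
      linarith
    have hpinv : (p a)⁻¹ ≤ (p b)⁻¹ := by
      rw [hp a, hp b, ← Real.exp_neg, ← Real.exp_neg, neg_neg, neg_neg]
      exact Real.exp_le_exp.mpr h2
    have : μ * Real.exp (μ * a) ≤ μ * Real.exp (μ * b) :=
      mul_le_mul_of_nonneg_left h1 hμ.le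
    rw [hA]
    simp only [div_eq_mul_inv]
    exact mul_le_mul this hpinv (inv_nonneg.mpr (hppos a).le) (by positivity)
  -- g t := A t * F t
  have hkform : ∀ t, k t = (1 + A t * F t)⁻¹ := fun t => hk t
  have hgnn : ∀ t, 0 ≤ t → 0 ≤ A t * F t := fun t ht =>
    mul_nonneg (hApos t).le (hFnn t ht)
  constructor
  · intro t ht
    rw [hkform t]
    have h1 : (0:ℝ) < 1 + A t * F t := by linarith [hgnn t ht]
    constructor
    · exact inv_pos.mpr h1
    · rw [inv_le_one_iff₀]
      right
      linarith [hgnn t ht]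
  · intro a ha b hb hab
    rw [hkform a, hkform b]
    have hga : 0 ≤ A a * F a := hgnn a ha
    have hmono : A a * F a ≤ A b * F b :=
      mul_le_mul (hAmono a b ha hab) (hFmono a b ha hab) (hFnn a ha) (hApos b).le
    have h1 : (0:ℝ) < 1 + A a * F a := by linarith
    exact inv_anti₀ h1 (by linarith)
end

section
/- Let Z_t solve the ODE z'_t = (μ + (1 - k_t) λ_t) z_t with Z_0 = 1, where k_t satisfies the Riccati equation k'_t = -(μ + λ_t) k_t + λ_t k_t² with k_0 = 1, λ continuous. Then the function f_t = k_t · exp(μ t + ∫₀ᵗ (1 - k_s) λ_s ds) is constantly equal to 1 for all t ≥ 0. -/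
open MeasureTheory intervalIntegral Real

/-- If `k` solves the Riccati equation with `k 0 = 1`, then
`f t = k t · exp(μ t + ∫₀ᵗ (1 - k s) λ s ds)` is constantly 1, i.e. the
regulatory constraint holds in the infinite-pool limit. -/
theorem riccati_regulatory_constraint
    (μ : ℝ) (l : ℝ → ℝ) (hl : Continuous l)
    (k : ℝ → ℝ) (hk0 : k 0 = 1)
    (hk : ∀ t, HasDerivAt k (-(μ + l t) * k t + l t * (k t) ^ 2) t)
    (hkcont : Continuous k) :
    ∀ t, 0 ≤ t →
      k t * Real.exp (μ * t + ∫ s in (0:ℝ)..t, (1 - k s) * l s) = 1 := by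
  set g : ℝ → ℝ := fun t => μ * t + ∫ s in (0:ℝ)..t, (1 - k s) * l s with hgdef
  have hc : Continuous (fun s => (1 - k s) * l s) := (continuous_const.sub hkcont).mul hl
  have hg : ∀ t, HasDerivAt g (μ + (1 - k t) * l t) t := by
    intro t
    have h1 : HasDerivAt (fun t : ℝ => μ * t) μ t := by
      simpa using (hasDerivAt_id t).const_mul μ
    have h2 : HasDerivAt (fun t => ∫ s in (0:ℝ)..t, (1 - k s) * l s) ((1 - k t) * l t) t :=
      intervalIntegral.integral_hasDerivAt_right (hc.intervalIntegrable _ _)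
        (hc.stronglyMeasurableAtFilter _ _) hc.continuousAt
    exact h1.add h2
  set f : ℝ → ℝ := fun t => k t * Real.exp (g t) with hfdef
  have hf : ∀ t, HasDerivAt f 0 t := by
    intro t
    have := (hk t).mul ((hg t).exp)
    have heq : (-(μ + l t) * k t + l t * k t ^ 2) * Real.exp (g t) +
        k t * (Real.exp (g t) * (μ + (1 - k t) * l t)) = 0 := by ring
    rw [hfdef]
    rw [heq] at this
    exact this
  have hconst : ∀ t, f t = f 0 := by
    intro t
    apply is_const_of_deriv_eq_zero (fun x => (hf x).differentiableAt)
    intro x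
    exact (hf x).deriv
  intro t _
  have := hconst t
  simp only [hfdef, hgdef] at this
  simpa [hk0] using this
end

section
/- Suppose k, ℓ : [0,T] → ℝ are differentiable with k_0 = ℓ_0 = 1, k satisfies the Riccati equation k'_t = -(μ + λ_t) k_t + λ_t k_t², and ℓ satisfies ℓ'_t = -(μ + λ_t) ℓ_t + λ_t ℓ_t² - h_t with h_t ≥ 0 continuous, where λ is continuous nonnegative and 0 ≤ k_t, ℓ_t ≤ 1. Then ℓ_t ≤ k_t for all t ∈ [0,T]. -/
open Set Real

/- The difference `L - k` solves the linear equation `d' = c d - h` with continuous coefficient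
`c = -(μ + l) + l (L + k)` and `d 0 = 0`. Since `c ≤ C` on the compact interval and `h ≥ 0`,
`d` can never cross the barrier `ε e^{(C+1)(t-a)}`; letting `ε → 0` gives `d ≤ 0`. -/

theorem le_zero_of_deriv_right_le_mul {f f' : ℝ → ℝ} {a b C : ℝ}
    (hf : ContinuousOn f (Icc a b)) (hf' : ∀ x ∈ Ico a b, HasDerivWithinAt f (f' x) (Ici x) x)
    (ha : f a ≤ 0) (bound : ∀ x ∈ Ico a b, 0 < f x → f' x ≤ C * f x) :
    ∀ ⦃x⦄, x ∈ Icc a b → f x ≤ 0 := by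
  intro x hx
  have barrier : ∀ ε > 0, f x ≤ ε * exp ((C + 1) * (x - a)) := by
    intro ε hε
    refine image_le_of_deriv_right_lt_deriv_boundary hf hf'
      (B := fun t => ε * exp ((C + 1) * (t - a)))
      (B' := fun t => (C + 1) * (ε * exp ((C + 1) * (t - a)))) (by simpa using ha.trans hε.le)
      (fun t => ((((hasDerivAt_id t).sub_const a).const_mul (C + 1)).exp.const_mul ε).congr_deriv
        (by simp only [id, mul_one]; ring)) (fun t ht hft => ?_) hx
    have hpos : 0 < ε * exp ((C + 1) * (t - a)) := by positivity
    calc f' t ≤ C * f t := bound t ht (hft ▸ hpos)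
      _ < _ := by rw [hft]; linarith
  refine le_of_forall_pos_le_add fun δ hδ => ?_
  have hE : 0 < exp ((C + 1) * (x - a)) := exp_pos _
  simpa [div_mul_cancel₀ δ hE.ne'] using barrier (δ / exp ((C + 1) * (x - a))) (by positivity)

theorem le_zero_of_hasDerivAt_mul_sub {a b : ℝ} {f c h : ℝ → ℝ}
    (hc : ContinuousOn c (Icc a b)) (hf : ∀ t ∈ Icc a b, HasDerivAt f (c t * f t - h t) t)
    (hh : ∀ t ∈ Icc a b, 0 ≤ h t) (ha : f a ≤ 0) : ∀ t ∈ Icc a b, f t ≤ 0 := by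
  obtain ⟨C, hC⟩ := isCompact_Icc.bddAbove_image hc
  refine le_zero_of_deriv_right_le_mul (C := C)
    (fun t ht => (hf t ht).continuousAt.continuousWithinAt)
    (fun t ht => (hf t (Ico_subset_Icc_self ht)).hasDerivWithinAt) ha fun t ht hft => ?_
  have hct : c t ≤ C := hC (mem_image_of_mem c (Ico_subset_Icc_self ht))
  have := hh t (Ico_subset_Icc_self ht)
  nlinarith

theorem riccati_comparison_below_general
    (T μ : ℝ)
    (l : ℝ → ℝ) (hl : Continuous l)
    (h : ℝ → ℝ) (hh0 : ∀ t, 0 ≤ h t)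
    (k L : ℝ → ℝ) (hk0 : k 0 = 1) (hL0 : L 0 = 1)
    (hk : ∀ t ∈ Set.Icc 0 T, HasDerivAt k (-(μ + l t) * k t + l t * (k t) ^ 2) t)
    (hL : ∀ t ∈ Set.Icc 0 T,
      HasDerivAt L (-(μ + l t) * L t + l t * (L t) ^ 2 - h t) t) :
    ∀ t ∈ Set.Icc 0 T, L t ≤ k t := by
  have hkc : ContinuousOn k (Icc 0 T) := fun t ht => (hk t ht).continuousAt.continuousWithinAt
  have hLc : ContinuousOn L (Icc 0 T) := fun t ht => (hL t ht).continuousAt.continuousWithinAt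
  have hc : ContinuousOn (fun t => -(μ + l t) + l t * (L t + k t)) (Icc 0 T) := by fun_prop
  have hdiff : ∀ t ∈ Icc 0 T, HasDerivAt (fun t => L t - k t)
      ((-(μ + l t) + l t * (L t + k t)) * (L t - k t) - h t) t := fun t ht =>
    ((hL t ht).sub (hk t ht)).congr_deriv (by ring)
  intro t ht
  exact sub_nonpos.1 <|
    le_zero_of_hasDerivAt_mul_sub hc hdiff (fun t _ => hh0 t) (by simp [hk0, hL0]) t ht

/-- ODE comparison: a perturbation of the Riccati equation by a
nonpositive forcing term `-h` (with `h ≥ 0` continuous) is dominated by the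
Riccati solution. -/
theorem riccati_comparison_below
    (T μ : ℝ) (hT : 0 ≤ T)
    (l : ℝ → ℝ) (hl : Continuous l) (hl0 : ∀ t, 0 ≤ l t)
    (h : ℝ → ℝ) (hh : Continuous h) (hh0 : ∀ t, 0 ≤ h t)
    (k L : ℝ → ℝ) (hk0 : k 0 = 1) (hL0 : L 0 = 1)
    (hk : ∀ t ∈ Set.Icc 0 T, HasDerivAt k (-(μ + l t) * k t + l t * (k t) ^ 2) t)
    (hL : ∀ t ∈ Set.Icc 0 T,
      HasDerivAt L (-(μ + l t) * L t + l t * (L t) ^ 2 - h t) t)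
    (hkb : ∀ t ∈ Set.Icc 0 T, 0 ≤ k t ∧ k t ≤ 1)
    (hLb : ∀ t ∈ Set.Icc 0 T, 0 ≤ L t ∧ L t ≤ 1) :
    ∀ t ∈ Set.Icc 0 T, L t ≤ k t :=
  riccati_comparison_below_general T μ l hl h hh0 k L hk0 hL0 hk hL
end

section
/- Define for each 1 ≤ j ≤ n functions u_j : [0,T] → ℝ satisfying u'_j(s) = μ u_j(s) + λ_s [ j (1 - k_s/(j+1)) u_{j+1}(s) - (j-1) u_j(s) ], with u_{n+1} ≡ 0, u_n(0) = n, u_j(0) = 0 for j < n, where λ ≥ 0 continuous, 0 ≤ k_s ≤ 1. Then u_j(s) ≥ 0 for all j and all s ∈ [0,T]. -/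
open Set

/-- Multiplying by the integrating factor `exp (-∫ p)` turns `f' = p f + q` into
`(f e^{-∫ p})' = q e^{-∫ p} ≥ 0`, so `f e^{-∫ p}` is monotone and keeps the sign of
`f t₀`. -/
theorem nonneg_of_hasDerivAt_linear {t₀ T : ℝ} {p q f : ℝ → ℝ} (hp : Continuous p)
    (hq : ∀ s ∈ Icc t₀ T, 0 ≤ q s) (hf₀ : 0 ≤ f t₀)
    (hf : ∀ s ∈ Icc t₀ T, HasDerivAt f (p s * f s + q s) s) :
    ∀ s ∈ Icc t₀ T, 0 ≤ f s := by
  set P : ℝ → ℝ := fun s => ∫ t in t₀..s, p t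
  have hP : ∀ s, HasDerivAt P (p s) s := fun s =>
    intervalIntegral.integral_hasDerivAt_right (hp.intervalIntegrable _ _)
      hp.stronglyMeasurable.stronglyMeasurableAtFilter hp.continuousAt
  set g : ℝ → ℝ := fun s => f s * Real.exp (-P s)
  have hg : ∀ s ∈ Icc t₀ T, HasDerivAt g (q s * Real.exp (-P s)) s := by
    intro s hs
    exact ((hf s hs).mul (hP s).neg.exp).congr_deriv (by rw [Pi.neg_apply]; ring)
  have hg_mono : MonotoneOn g (Icc t₀ T) := by
    refine monotoneOn_of_hasDerivWithinAt_nonneg (convex_Icc t₀ T)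
      (fun s hs => (hg s hs).continuousAt.continuousWithinAt)
      (fun s hs => (hg s (interior_subset hs)).hasDerivWithinAt) (fun s hs => ?_)
    exact mul_nonneg (hq s (interior_subset hs)) (Real.exp_pos _).le
  intro s hs
  have hg_s : 0 ≤ g s := by
    have hg₀ : g t₀ = f t₀ := by simp [g, P]
    have := hg_mono (left_mem_Icc.2 (hs.1.trans hs.2)) hs hs.1
    linarith
  have hf_eq : f s = g s * Real.exp (P s) := by
    simp only [g, mul_assoc, ← Real.exp_add, neg_add_cancel, Real.exp_zero, mul_one]
  rw [hf_eq]
  exact mul_nonneg hg_s (Real.exp_pos _).le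

theorem mul_one_sub_div_succ_nonneg {c : ℝ} (hc : c ≤ 1) (j : ℕ) :
    0 ≤ (j : ℝ) * (1 - c / (j + 1)) := by
  have hj : (0 : ℝ) < j + 1 := by positivity
  have : c / (j + 1) ≤ 1 := by rw [div_le_one hj]; linarith
  exact mul_nonneg j.cast_nonneg (by linarith)

theorem u_system_nonneg_general
    (T μ : ℝ) (n : ℕ)
    (l : ℝ → ℝ) (hl : Continuous l) (hl0 : ∀ t, 0 ≤ l t)
    (k : ℝ → ℝ) (hkb : ∀ t, 0 ≤ k t ∧ k t ≤ 1)
    (u : ℕ → ℝ → ℝ)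
    (htop : ∀ s, u (n + 1) s = 0)
    (hinit : u n 0 = n) (hinit' : ∀ j < n, u j 0 = 0)
    (hode : ∀ j, 1 ≤ j → j ≤ n → ∀ s ∈ Set.Icc 0 T,
      HasDerivAt (u j)
        (μ * u j s + l s * ((j : ℝ) * (1 - k s / (j + 1)) * u (j + 1) s
          - ((j : ℝ) - 1) * u j s)) s) :
    ∀ j, 1 ≤ j → j ≤ n → ∀ s ∈ Set.Icc 0 T, 0 ≤ u j s := by
  intro j hj hjn
  -- `u_j` solves a linear ODE driven by `u_{j+1}`, so nonnegativity propagates down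
  -- from `u_{n+1} = 0`.
  refine Nat.decreasingInduction' (P := fun i => ∀ s ∈ Icc 0 T, 0 ≤ u i s)
    (fun i hi hji hnext => ?_) (hjn.trans n.le_succ) (fun s _ => (htop s).ge)
  have hi₀ : 0 ≤ u i 0 := by
    rcases (Nat.lt_succ_iff.1 hi).eq_or_lt with rfl | hin
    · rw [hinit]; positivity
    · rw [hinit' i hin]
  refine nonneg_of_hasDerivAt_linear (p := fun s => μ - l s * ((i : ℝ) - 1))
    (q := fun s => l s * ((i : ℝ) * (1 - k s / (i + 1)) * u (i + 1) s)) (by fun_prop)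
    (fun s hs => ?_) hi₀ (fun s hs => ?_)
  · exact mul_nonneg (hl0 s)
      (mul_nonneg (mul_one_sub_div_succ_nonneg (hkb s).2 i) (hnext s hs))
  · convert hode i (hj.trans hji) (Nat.lt_succ_iff.1 hi) s hs using 1
    ring

/-- The triangular linear ODE system for
`u_j(s) = E[L_s 1_{N_s = j}]` preserves nonnegativity. -/
theorem u_system_nonneg
    (T μ : ℝ) (hT : 0 ≤ T) (n : ℕ) (hn : 1 ≤ n)
    (l : ℝ → ℝ) (hl : Continuous l) (hl0 : ∀ t, 0 ≤ l t)
    (k : ℝ → ℝ) (hk : Continuous k) (hkb : ∀ t, 0 ≤ k t ∧ k t ≤ 1)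
    (u : ℕ → ℝ → ℝ)
    (htop : ∀ s, u (n + 1) s = 0)
    (hinit : u n 0 = n) (hinit' : ∀ j < n, u j 0 = 0)
    (hode : ∀ j, 1 ≤ j → j ≤ n → ∀ s ∈ Set.Icc 0 T,
      HasDerivAt (u j)
        (μ * u j s + l s * ((j : ℝ) * (1 - k s / (j + 1)) * u (j + 1) s
          - ((j : ℝ) - 1) * u j s)) s) :
    ∀ j, 1 ≤ j → j ≤ n → ∀ s ∈ Set.Icc 0 T, 0 ≤ u j s :=
  u_system_nonneg_general T μ n l hl hl0 k hkb u htop hinit hinit' hode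
end

section
/- Let u_j solve the system u'_j = μ u_j + λ_s[j(1 - k_s/(j+1)) u_{j+1} - (j-1) u_j] (u_{n+1} ≡ 0, u_n(0)=n, u_j(0)=0 for j<n) and let z_s = Σ_{j=1}^n u_j(s)/j. Then z satisfies z'_s = μ z_s + (1 - k_s) λ_s (z_s - u_1(s)) with z_0 = 1. -/
/-!
Dividing the `j`-th equation by `j` and writing `b_j = u_j / j`, the drift of `u_j / j` is
`μ b_j + λ ((u_{j+1} - u_j) - k (b_{j+1} - b_j) + (1 - k) b_j)`. Summing over `j`, both
differences telescope; `u_{n+1} = 0` and `b_1 = u_1` leave `μ z + (1 - k) λ (z - u_1)`.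
At time `0` only the `j = n` term survives, and it equals `n / n = 1`.
-/

open Finset

lemma drift_div_eq (μ l k : ℝ) (a : ℕ → ℝ) {j : ℕ} (hj : j ≠ 0) :
    (μ * a j + l * ((j : ℝ) * (1 - k / (j + 1)) * a (j + 1) - ((j : ℝ) - 1) * a j)) / j
      = μ * (a j / j) + l * ((a (j + 1) - a j)
          - k * (a (j + 1) / (j + 1 : ℕ) - a j / j) + (1 - k) * (a j / j)) := by
  have hj' : (j : ℝ) ≠ 0 := Nat.cast_ne_zero.mpr hj
  push_cast
  field_simp
  ring

lemma sum_drift_div_eq (μ l k : ℝ) (a : ℕ → ℝ) {n : ℕ} (hn : 1 ≤ n)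
    (htop : a (n + 1) = 0) :
    ∑ j ∈ Icc 1 n,
        (μ * a j + l * ((j : ℝ) * (1 - k / (j + 1)) * a (j + 1) - ((j : ℝ) - 1) * a j)) / j
      = μ * ∑ j ∈ Icc 1 n, a j / j + (1 - k) * l * (∑ j ∈ Icc 1 n, a j / j - a 1) := by
  rw [sum_congr rfl fun j hj => drift_div_eq μ l k a (Nat.one_le_iff_ne_zero.mp (mem_Icc.mp hj).1),
    sum_add_distrib, ← mul_sum, ← mul_sum, sum_add_distrib, sum_sub_distrib, ← mul_sum,
    ← mul_sum, sum_Icc_sub hn a, sum_Icc_sub hn (fun j => a j / (j : ℕ)), htop]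
  simp only [Nat.cast_one, div_one, zero_div]
  ring

lemma sum_Icc_div_natCast_eq_one {u : ℕ → ℝ} {n : ℕ} (hn : 1 ≤ n)
    (hinit : u n = n) (hinit' : ∀ j < n, u j = 0) :
    ∑ j ∈ Icc 1 n, u j / j = 1 := by
  rw [sum_eq_single_of_mem n (mem_Icc.mpr ⟨hn, le_rfl⟩), hinit,
    div_self (Nat.cast_ne_zero.mpr (by omega))]
  intro j hj hjn
  rw [hinit' j (lt_of_le_of_ne (mem_Icc.mp hj).2 hjn), zero_div]

theorem z_dynamics_from_u_system_general
    (T μ : ℝ) (n : ℕ) (hn : 1 ≤ n)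
    (l : ℝ → ℝ)
    (k : ℝ → ℝ)
    (u : ℕ → ℝ → ℝ)
    (htop : ∀ s, u (n + 1) s = 0)
    (hinit : u n 0 = n) (hinit' : ∀ j < n, u j 0 = 0)
    (hode : ∀ j, 1 ≤ j → j ≤ n → ∀ s ∈ Set.Icc 0 T,
      HasDerivAt (u j)
        (μ * u j s + l s * ((j : ℝ) * (1 - k s / (j + 1)) * u (j + 1) s
          - ((j : ℝ) - 1) * u j s)) s)
    (z : ℝ → ℝ) (hz : ∀ s, z s = ∑ j ∈ Finset.Icc 1 n, u j s / j) :
    z 0 = 1 ∧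
    ∀ s ∈ Set.Icc 0 T,
      HasDerivAt z (μ * z s + (1 - k s) * l s * (z s - u 1 s)) s := by
  refine ⟨(hz 0).trans (sum_Icc_div_natCast_eq_one hn hinit hinit'), fun s hs => ?_⟩
  have hsum := HasDerivAt.fun_sum (u := Icc 1 n) fun j hj =>
    (hode j (mem_Icc.mp hj).1 (mem_Icc.mp hj).2 s hs).div_const (j : ℝ)
  rw [hz, ← sum_drift_div_eq μ (l s) (k s) (fun j => u j s) hn (htop s), funext hz]
  exact hsum

/-- If the `u_j` solve the triangular system, then
`z_s = Σ_{j=1}^n u_j(s)/j` satisfies `z' = μ z + (1-k) λ (z - u_1)`, `z 0 = 1`. -/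
theorem z_dynamics_from_u_system
    (T μ : ℝ) (hT : 0 ≤ T) (n : ℕ) (hn : 1 ≤ n)
    (l : ℝ → ℝ) (hl : Continuous l) (hl0 : ∀ t, 0 ≤ l t)
    (k : ℝ → ℝ) (hk : Continuous k) (hkb : ∀ t, 0 ≤ k t ∧ k t ≤ 1)
    (u : ℕ → ℝ → ℝ)
    (htop : ∀ s, u (n + 1) s = 0)
    (hinit : u n 0 = n) (hinit' : ∀ j < n, u j 0 = 0)
    (hode : ∀ j, 1 ≤ j → j ≤ n → ∀ s ∈ Set.Icc 0 T,
      HasDerivAt (u j)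
        (μ * u j s + l s * ((j : ℝ) * (1 - k s / (j + 1)) * u (j + 1) s
          - ((j : ℝ) - 1) * u j s)) s)
    (z : ℝ → ℝ) (hz : ∀ s, z s = ∑ j ∈ Finset.Icc 1 n, u j s / j) :
    z 0 = 1 ∧
    ∀ s ∈ Set.Icc 0 T,
      HasDerivAt z (μ * z s + (1 - k s) * l s * (z s - u 1 s)) s :=
  z_dynamics_from_u_system_general T μ n hn l k u htop hinit hinit' hode z hz
end
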